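/- arXiv:0802.1764 — 9 statements merged into one kernel-verified Lean document; each statement's English description precedes it below -/
import Mathlib

section
/- For every real number s and every positive integer x, ∑_{j=x+1}^{x²} (1/j^s) · ∑_{i=1}^{x} (1/i^s) · M_{⌊x²/(i·j)⌋}(s) = H_{x²}(s) − H_{x}(s). -/
open Finset ArithmeticFunction

/-- Generalized oscillatory number in power `s`: `M_n(s) = ∑_{k=1}^{n} μ(k)/k^s`. -/
noncomputable def Mgen (s : ℝ) (n : ℕ) : ℝ :=
  ∑ k ∈ Finset.Icc 1 n, (moebius k : ℝ) / (k : ℝ) ^ s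

/-- Generalized harmonic number in power `s`: `H_n(s) = ∑_{k=1}^{n} 1/k^s`. -/
noncomputable def Hgen (s : ℝ) (n : ℕ) : ℝ :=
  ∑ k ∈ Finset.Icc 1 n, 1 / (k : ℝ) ^ s

/-!
Put `N = x²`. Dividing by `n ^ s` is multiplicative in `n`, so it commutes with Dirichlet
convolution; since `ζ * μ = 1`, expanding the partial sums of `f * ζ * μ` twice gives, for every
arithmetic function `f`,
`∑_{n ≤ N} f(n)/n^s = ∑_{j ≤ N} f(j)/j^s · ∑_{i ≤ N/j} 1/i^s · M_{⌊N/(ij)⌋}(s)`.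
For `f` the indicator of `n > x` the left side is `H_N(s) - H_x(s)`. On the right only `j > x`
survives, and then `N/j ≤ x`, while the extra terms `N/j < i ≤ x` of the statement vanish
because `M_0(s) = 0`.
-/

theorem Nat.Icc_one_eq_Ioc_zero (n : ℕ) : Icc 1 n = Ioc 0 n :=
  Icc_add_one_left_eq_Ioc 0 n

theorem Finset.sum_Ioc_zero_ite_lt {M : Type*} [AddCommMonoid M] (x N : ℕ) (g : ℕ → M) :
    ∑ n ∈ Ioc 0 N, (if x < n then g n else 0) = ∑ n ∈ Ioc x N, g n := by
  rw [← sum_filter]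
  congr 1
  ext n
  simp only [mem_filter, mem_Ioc]
  omega

namespace ArithmeticFunction

noncomputable def divRpow (f : ArithmeticFunction ℝ) (s : ℝ) : ArithmeticFunction ℝ :=
  ⟨fun n => f n / (n : ℝ) ^ s, by simp⟩

@[simp]
theorem divRpow_apply (f : ArithmeticFunction ℝ) (s : ℝ) (n : ℕ) :
    f.divRpow s n = f n / (n : ℝ) ^ s :=
  rfl

theorem mul_divRpow (f g : ArithmeticFunction ℝ) (s : ℝ) :
    (f * g).divRpow s = f.divRpow s * g.divRpow s := by
  ext n
  simp only [divRpow_apply, mul_apply, sum_div]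
  refine sum_congr rfl fun p hp => ?_
  rw [← (Nat.mem_divisorsAntidiagonal.mp hp).1, Nat.cast_mul,
    Real.mul_rpow p.1.cast_nonneg p.2.cast_nonneg, mul_div_mul_comm]

end ArithmeticFunction

theorem Mgen_zero (s : ℝ) : Mgen s 0 = 0 := by
  simp [Mgen]

theorem Hgen_sub_Hgen {m n : ℕ} (s : ℝ) (hmn : m ≤ n) :
    Hgen s n - Hgen s m = ∑ k ∈ Ioc m n, 1 / (k : ℝ) ^ s := by
  rw [Hgen, Hgen, Nat.Icc_one_eq_Ioc_zero, Nat.Icc_one_eq_Ioc_zero,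
    ← sum_Ioc_consecutive _ (Nat.zero_le m) hmn, add_sub_cancel_left]

theorem sum_Ioc_mul_Mgen_div_of_div_le {N j x : ℕ} (h : N / j ≤ x) (a : ℕ → ℝ) (s : ℝ) :
    ∑ i ∈ Ioc 0 (N / j), a i * Mgen s (N / j / i) = ∑ i ∈ Icc 1 x, a i * Mgen s (N / (i * j)) := by
  rw [Nat.Icc_one_eq_Ioc_zero]
  refine sum_subset (Ioc_subset_Ioc_right h) (fun i hi hi' => ?_) |>.trans
    (sum_congr rfl fun i _ => by rw [Nat.div_div_eq_div_mul, Nat.mul_comm j])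
  have : N / j < i := by simp_all
  rw [Nat.div_eq_of_lt this, Mgen_zero, mul_zero]

theorem sum_Ioc_divRpow_eq_sum_mul_sum_mul_Mgen (f : ArithmeticFunction ℝ) (s : ℝ) (N : ℕ) :
    ∑ n ∈ Ioc 0 N, f n / (n : ℝ) ^ s =
      ∑ j ∈ Ioc 0 N, f j / (j : ℝ) ^ s *
        ∑ i ∈ Ioc 0 (N / j), 1 / (i : ℝ) ^ s * Mgen s (N / j / i) := by
  set ζs := (zeta : ArithmeticFunction ℝ).divRpow s
  set μs := (moebius : ArithmeticFunction ℝ).divRpow s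
  have hf : f.divRpow s = f.divRpow s * (ζs * μs) := by
    rw [← mul_divRpow, ← mul_divRpow, coe_zeta_mul_coe_moebius, mul_one]
  calc ∑ n ∈ Ioc 0 N, f n / (n : ℝ) ^ s
      = ∑ n ∈ Ioc 0 N, (f.divRpow s * (ζs * μs)) n := by rw [← hf]; rfl
    _ = ∑ j ∈ Ioc 0 N, f.divRpow s j *
          ∑ i ∈ Ioc 0 (N / j), ζs i * ∑ k ∈ Ioc 0 (N / j / i), μs k := by
        simp_rw [sum_Ioc_mul_eq_sum_sum]
    _ = _ := by
        refine sum_congr rfl fun j _ => congrArg _ (sum_congr rfl fun i hi => ?_)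
        have hi0 : i ≠ 0 := (mem_Ioc.mp hi).1.ne'
        simp [ζs, μs, Mgen, Nat.Icc_one_eq_Ioc_zero, hi0, mul_sum]

theorem stmt_2_general (s : ℝ) (x : ℕ) :
    ∑ j ∈ Finset.Icc (x + 1) (x ^ 2), (1 / (j : ℝ) ^ s) *
      ∑ i ∈ Finset.Icc 1 x, (1 / (i : ℝ) ^ s) * Mgen s (x ^ 2 / (i * j)) =
    Hgen s (x ^ 2) - Hgen s x := by
  let tail : ArithmeticFunction ℝ := ⟨fun n => if x < n then 1 else 0, by simp⟩
  have hxx : x ≤ x ^ 2 := Nat.le_self_pow two_ne_zero x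
  have key := sum_Ioc_divRpow_eq_sum_mul_sum_mul_Mgen tail s (x ^ 2)
  simp only [tail, coe_mk, ite_div, zero_div, ite_mul, zero_mul, sum_Ioc_zero_ite_lt] at key
  rw [Hgen_sub_Hgen s hxx, key, Icc_add_one_left_eq_Ioc]
  refine sum_congr rfl fun j hj => ?_
  have hdiv : x ^ 2 / j ≤ x :=
    Nat.div_le_of_le_mul (by rw [sq]; exact Nat.mul_le_mul_right x (mem_Ioc.mp hj).1.le)
  rw [sum_Ioc_mul_Mgen_div_of_div_le hdiv]

theorem stmt_2 (s : ℝ) (x : ℕ) (hx : 0 < x) :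
    ∑ j ∈ Finset.Icc (x + 1) (x ^ 2), (1 / (j : ℝ) ^ s) *
      ∑ i ∈ Finset.Icc 1 x, (1 / (i : ℝ) ^ s) * Mgen s (x ^ 2 / (i * j)) =
    Hgen s (x ^ 2) - Hgen s x :=
  stmt_2_general s x
end

section
/- For every real number s and every positive integer x, H_{x²}(s) = 2·H_{x}(s) − ∑_{i=1}^{x} ∑_{j=1}^{x} (1/(i·j)^s) · M_{⌊x²/(i·j)⌋}(s). -/
open Finset ArithmeticFunction

/-!
The Dirichlet inverse of a completely multiplicative `F` with `F 1 = 1` is `μ F`; summing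
`F * μ F = 1` up to `N` gives `∑_{m ≤ N} m^{-s} M_{⌊N/m⌋}(s) = 1` for every `N ≥ 1`.
Put `g(i, j) = (ij)^{-s} M_{⌊x²/(ij)⌋}(s)` on the lattice points under the hyperbola `ij ≤ x²`.
By the identity above, the rows `i ≤ x` sum to `H_x` and the columns `j > x` sum to
`H_{x²} - H_x`. The rows `i ≤ x` are exactly the square `i, j ≤ x` together with the
columns `j > x`, so `H_x = ∑_{i,j ≤ x} g(i, j) + H_{x²} - H_x`.
-/

open scoped ArithmeticFunction.Moebius

namespace ArithmeticFunction

theorem mul_pmul_moebius {R : Type*} [CommRing R] {F : ArithmeticFunction R} (hF₁ : F 1 = 1)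
    (hF : ∀ a b, F (a * b) = F a * F b) : F * (μ : ArithmeticFunction R).pmul F = 1 := by
  ext n
  have hμ : ∑ d ∈ n.divisors, (μ d : R) = (1 : ArithmeticFunction R) n := by
    rw [← coe_moebius_mul_coe_zeta, coe_mul_zeta_apply]
    simp only [intCoe_apply]
  calc (F * (μ : ArithmeticFunction R).pmul F) n
      = ∑ p ∈ n.divisorsAntidiagonal, F n * (μ p.2 : R) := by
        rw [mul_apply]
        refine sum_congr rfl fun p hp => ?_
        rw [← (Nat.mem_divisorsAntidiagonal.mp hp).1, pmul_apply, intCoe_apply, hF]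
        ring
    _ = F n * (1 : ArithmeticFunction R) n := by
        rw [← mul_sum, Nat.sum_divisorsAntidiagonal' (f := fun _ b => (μ b : R)), hμ]
    _ = (1 : ArithmeticFunction R) n := by
        rw [one_apply]
        split_ifs with h <;> simp [h, hF₁]

theorem sum_Ioc_mul_sum_Ioc_moebius_mul_eq_one {R : Type*} [CommRing R]
    {F : ArithmeticFunction R} (hF₁ : F 1 = 1) (hF : ∀ a b, F (a * b) = F a * F b) {N : ℕ}
    (hN : 0 < N) : ∑ n ∈ Ioc 0 N, F n * ∑ m ∈ Ioc 0 (N / n), (μ m : R) * F m = 1 := by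
  have h := sum_Ioc_mul_eq_sum_sum F ((μ : ArithmeticFunction R).pmul F) N
  simp only [mul_pmul_moebius hF₁ hF, pmul_apply, intCoe_apply] at h
  rw [← h, sum_eq_single_of_mem 1 (by simp; omega) fun n _ hn => by simp [hn], one_one]

-- The `if` is needed: `(0 : ℝ) ^ (0 : ℝ) = 1`.
noncomputable def oneDivRpow (s : ℝ) : ArithmeticFunction ℝ :=
  ⟨fun n => if n = 0 then 0 else 1 / (n : ℝ) ^ s, if_pos rfl⟩

theorem oneDivRpow_apply {s : ℝ} {n : ℕ} (hn : n ≠ 0) : oneDivRpow s n = 1 / (n : ℝ) ^ s :=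
  if_neg hn

theorem oneDivRpow_mul (s : ℝ) (a b : ℕ) :
    oneDivRpow s (a * b) = oneDivRpow s a * oneDivRpow s b := by
  rcases eq_or_ne a 0 with rfl | ha
  · simp
  rcases eq_or_ne b 0 with rfl | hb
  · simp
  rw [oneDivRpow_apply ha, oneDivRpow_apply hb, oneDivRpow_apply (mul_ne_zero ha hb),
    Nat.cast_mul, Real.mul_rpow (Nat.cast_nonneg a) (Nat.cast_nonneg b), one_div_mul_one_div]

end ArithmeticFunction

theorem sum_Icc_one_div_rpow_mul_Mgen_div (s : ℝ) {N : ℕ} (hN : 0 < N) :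
    ∑ m ∈ Icc 1 N, 1 / (m : ℝ) ^ s * Mgen s (N / m) = 1 := by
  have h := sum_Ioc_mul_sum_Ioc_moebius_mul_eq_one (F := oneDivRpow s)
    (by simp [oneDivRpow_apply]) (oneDivRpow_mul s) hN
  simp only [← Icc_add_one_left_eq_Ioc, zero_add] at h
  refine (sum_congr rfl fun m hm => ?_).trans h
  rw [oneDivRpow_apply (by grind), Mgen]
  congr 1
  refine sum_congr rfl fun k hk => ?_
  rw [oneDivRpow_apply (by grind), div_eq_mul_one_div]

theorem sum_Icc_one_div_rpow_mul_Mgen_div_mul (s : ℝ) {m N : ℕ} (hm : 0 < m) (hmN : m ≤ N) :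
    ∑ j ∈ Icc 1 (N / m), 1 / (m : ℝ) ^ s * (1 / (j : ℝ) ^ s * Mgen s (N / (m * j))) =
      1 / (m : ℝ) ^ s := by
  simp_rw [← Nat.div_div_eq_div_mul]
  rw [← mul_sum, sum_Icc_one_div_rpow_mul_Mgen_div s (Nat.div_pos hmN hm), mul_one]

theorem Hgen_eq_add_sum_Ioc (s : ℝ) {x N : ℕ} (h : x ≤ N) :
    Hgen s N = Hgen s x + ∑ k ∈ Ioc x N, 1 / (k : ℝ) ^ s := by
  have hIcc (n : ℕ) : Icc 1 n = Ioc 0 n := Icc_add_one_left_eq_Ioc 0 n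
  rw [Hgen, Hgen, hIcc, hIcc, sum_Ioc_consecutive _ (Nat.zero_le x) h]

theorem sum_Icc_sum_Icc_div_eq_add {M : Type*} [AddCommMonoid M] (g : ℕ → ℕ → M) {x N : ℕ}
    (h₁ : x * x ≤ N) (h₂ : N < (x + 1) * (x + 1)) :
    ∑ i ∈ Icc 1 x, ∑ j ∈ Icc 1 (N / i), g i j =
      ∑ i ∈ Icc 1 x, ∑ j ∈ Icc 1 x, g i j + ∑ j ∈ Ioc x N, ∑ i ∈ Icc 1 (N / j), g i j := by
  have hIcc (n : ℕ) : Icc 1 n = Ioc 0 n := Icc_add_one_left_eq_Ioc 0 n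
  have hsplit : ∀ i ∈ Icc 1 x,
      ∑ j ∈ Icc 1 (N / i), g i j = ∑ j ∈ Icc 1 x, g i j + ∑ j ∈ Ioc x (N / i), g i j := by
    intro i hi
    rw [mem_Icc] at hi
    have hxi : x ≤ N / i := by
      rw [Nat.le_div_iff_mul_le hi.1]
      exact (Nat.mul_le_mul_left x hi.2).trans h₁
    rw [hIcc, hIcc, sum_Ioc_consecutive _ (Nat.zero_le x) hxi]
  rw [sum_congr rfl hsplit, sum_add_distrib]
  congr 1
  refine sum_comm' fun i j => ?_
  simp only [mem_Icc, mem_Ioc]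
  constructor
  · rintro ⟨⟨hi, hix⟩, hxj, hji⟩
    rw [Nat.le_div_iff_mul_le hi] at hji
    refine ⟨⟨hi, ?_⟩, hxj, ?_⟩
    · rw [Nat.le_div_iff_mul_le (by omega)]
      nlinarith
    · nlinarith
  · rintro ⟨⟨hi, hij⟩, hxj, hjN⟩
    rw [Nat.le_div_iff_mul_le (by omega)] at hij
    refine ⟨⟨hi, ?_⟩, hxj, ?_⟩
    · nlinarith
    · rw [Nat.le_div_iff_mul_le hi]
      nlinarith

theorem stmt_4_general (s : ℝ) (x : ℕ) :
    Hgen s (x ^ 2) = 2 * Hgen s x -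
      ∑ i ∈ Finset.Icc 1 x, ∑ j ∈ Finset.Icc 1 x,
        (1 / ((i : ℝ) * (j : ℝ)) ^ s) * Mgen s (x ^ 2 / (i * j)) := by
  set g : ℕ → ℕ → ℝ := fun i j => 1 / (i : ℝ) ^ s * (1 / (j : ℝ) ^ s * Mgen s (x ^ 2 / (i * j)))
  have hx : x ≤ x ^ 2 := Nat.le_self_pow two_ne_zero x
  have hsquare : ∑ i ∈ Icc 1 x, ∑ j ∈ Icc 1 x, 1 / ((i : ℝ) * j) ^ s * Mgen s (x ^ 2 / (i * j)) =
      ∑ i ∈ Icc 1 x, ∑ j ∈ Icc 1 x, g i j := by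
    refine sum_congr rfl fun i _ => sum_congr rfl fun j _ => ?_
    rw [Real.mul_rpow (Nat.cast_nonneg i) (Nat.cast_nonneg j), ← one_div_mul_one_div, mul_assoc]
  have hrows : ∑ i ∈ Icc 1 x, ∑ j ∈ Icc 1 (x ^ 2 / i), g i j = Hgen s x :=
    sum_congr rfl fun i hi =>
      sum_Icc_one_div_rpow_mul_Mgen_div_mul s (by grind) ((mem_Icc.mp hi).2.trans hx)
  have hcols : ∑ j ∈ Ioc x (x ^ 2), ∑ i ∈ Icc 1 (x ^ 2 / j), g i j =
      ∑ j ∈ Ioc x (x ^ 2), 1 / (j : ℝ) ^ s :=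
    sum_congr rfl fun j hj =>
      (sum_congr rfl fun i _ => by rw [mul_comm j i, mul_left_comm]).trans
        (sum_Icc_one_div_rpow_mul_Mgen_div_mul s (by grind) (mem_Ioc.mp hj).2)
  have hsplit := sum_Icc_sum_Icc_div_eq_add g (sq x).ge (by nlinarith)
  rw [hsquare, Hgen_eq_add_sum_Ioc s hx]
  linarith

theorem stmt_4 (s : ℝ) (x : ℕ) (hx : 0 < x) :
    Hgen s (x ^ 2) = 2 * Hgen s x -
      ∑ i ∈ Finset.Icc 1 x, ∑ j ∈ Finset.Icc 1 x,
        (1 / ((i : ℝ) * (j : ℝ)) ^ s) * Mgen s (x ^ 2 / (i * j)) :=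
  stmt_4_general s x
end

section
/- For every positive integer x, x² = 2x − ∑_{i=1}^{x} ∑_{j=1}^{x} M(⌊x²/(i·j)⌋), where M(n) = ∑_{k=1}^{n} μ(k) is the Mertens function. -/
/-!
Since `ζ * μ = 1`, the Mertens function satisfies `∑_{b ≤ n} M(⌊n/b⌋) = 1` for `n ≥ 1`; applied to
`n = ⌊N/a⌋` this gives `∑_{b ≤ N/a} M(⌊N/(ab)⌋) = 1` for every `a ≤ N`. Hence the sum of
`M(⌊N/(ab)⌋)` over the hyperbola `ab ≤ N` is `N`, and over each of the strips `a ≤ √N`, `b ≤ √N`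
it is `⌊√N⌋`. Dirichlet's hyperbola method (hyperbola + square = both strips) leaves
`2⌊√N⌋ - N` for the square `i, j ≤ ⌊√N⌋`; take `N = x²`.
-/

open Finset ArithmeticFunction

/-- Mertens function: `M(n) = ∑_{k=1}^{n} μ(k)`. -/
def mertens (n : ℕ) : ℤ :=
  ∑ k ∈ Finset.Icc 1 n, moebius k

theorem sum_Icc_sum_Icc_eq_sum_Icc_sum_Icc_ite {M : Type*} [AddCommMonoid M]
    (f : ℕ → ℕ → M) {m K : ℕ} {n : ℕ → ℕ} (hm : m ≤ K) (hn : ∀ a, n a ≤ K) :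
    ∑ a ∈ Icc 1 m, ∑ b ∈ Icc 1 (n a), f a b =
      ∑ a ∈ Icc 1 K, ∑ b ∈ Icc 1 K, if a ≤ m ∧ b ≤ n a then f a b else 0 := by
  simp_rw [ite_and, sum_ite_irrel, sum_const_zero, ← sum_filter]
  refine sum_congr (by ext; simp only [mem_Icc, mem_filter]; omega) fun a _ ↦
    sum_congr ?_ fun _ _ ↦ rfl
  ext; simp only [mem_Icc, mem_filter]; have := hn a; omega

theorem sum_Icc_sum_Icc_div_hyperbola {M : Type*} [AddCommMonoid M]
    (f : ℕ → ℕ → M) {N u v : ℕ} (huv : u * v ≤ N) (hN : N < (u + 1) * (v + 1)) :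
    ∑ a ∈ Icc 1 N, ∑ b ∈ Icc 1 (N / a), f a b + ∑ a ∈ Icc 1 u, ∑ b ∈ Icc 1 v, f a b =
      ∑ a ∈ Icc 1 u, ∑ b ∈ Icc 1 (N / a), f a b +
        ∑ b ∈ Icc 1 v, ∑ a ∈ Icc 1 (N / b), f a b := by
  set K := N + u + v
  have hdiv : ∀ c, N / c ≤ K := fun c ↦ (Nat.div_le_self N c).trans (by omega)
  have hswap : ∑ b ∈ Icc 1 v, ∑ a ∈ Icc 1 (N / b), f a b =
      ∑ a ∈ Icc 1 K, ∑ b ∈ Icc 1 K, if b ≤ v ∧ a ≤ N / b then f a b else 0 := by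
    rw [sum_Icc_sum_Icc_eq_sum_Icc_sum_Icc_ite (fun b a ↦ f a b) (by omega) hdiv, sum_comm]
  rw [hswap, sum_Icc_sum_Icc_eq_sum_Icc_sum_Icc_ite f (K := K) (by omega) hdiv,
    sum_Icc_sum_Icc_eq_sum_Icc_sum_Icc_ite f (K := K) (by omega) hdiv,
    sum_Icc_sum_Icc_eq_sum_Icc_sum_Icc_ite f (n := fun _ ↦ v) (K := K) (by omega)
      (fun _ ↦ by omega),
    ← sum_add_distrib, ← sum_add_distrib]
  refine sum_congr rfl fun a ha ↦ ?_
  rw [← sum_add_distrib, ← sum_add_distrib]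
  refine sum_congr rfl fun b hb ↦ ?_
  simp only [mem_Icc] at ha hb
  have hNa : a * b ≤ N → a ≤ N := (Nat.le_mul_of_pos_right a hb.1).trans
  simp only [Nat.le_div_iff_mul_le ha.1, Nat.le_div_iff_mul_le hb.1, mul_comm b a,
    and_iff_right_of_imp hNa]
  -- `[ab ≤ N] + [a ≤ u][b ≤ v] = [a ≤ u][ab ≤ N] + [b ≤ v][ab ≤ N]`, case by case
  by_cases hau : a ≤ u <;> by_cases hbv : b ≤ v
  · have hab : a * b ≤ N := (Nat.mul_le_mul hau hbv).trans huv
    simp [hau, hbv, hab]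
  · simp [hau, hbv]
  · simp [hau, hbv, add_comm]
  · have hab : ¬ a * b ≤ N := fun h ↦
      hN.not_ge ((Nat.mul_le_mul (not_le.mp hau) (not_le.mp hbv)).trans h)
    simp [hau, hbv, hab]

theorem mertens_eq_sum_Ioc (n : ℕ) : mertens n = ∑ k ∈ Ioc 0 n, moebius k := by
  rw [mertens, ← Icc_add_one_left_eq_Ioc, zero_add]

theorem sum_Icc_mertens_div {N : ℕ} (hN : 0 < N) : ∑ n ∈ Icc 1 N, mertens (N / n) = 1 :=
  calc ∑ n ∈ Icc 1 N, mertens (N / n)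
      = ∑ n ∈ Ioc 0 N, (zeta : ArithmeticFunction ℤ) n * ∑ m ∈ Ioc 0 (N / n), moebius m := by
        refine sum_congr (Icc_add_one_left_eq_Ioc 0 N) fun n hn ↦ ?_
        rw [natCoe_apply, zeta_apply_ne (mem_Ioc.mp hn).1.ne', mertens_eq_sum_Ioc]
        simp
    _ = ∑ n ∈ Ioc 0 N, (1 : ArithmeticFunction ℤ) n := by
        rw [← sum_Ioc_mul_eq_sum_sum, coe_zeta_mul_moebius]
    _ = 1 := by simp [one_apply, hN.ne']

theorem sum_Icc_mertens_div_mul {N a : ℕ} (ha : 0 < a) (haN : a ≤ N) :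
    ∑ b ∈ Icc 1 (N / a), mertens (N / (a * b)) = 1 := by
  simp_rw [← Nat.div_div_eq_div_mul]
  exact sum_Icc_mertens_div (Nat.div_pos haN ha)

theorem sum_Icc_sum_Icc_mertens_div_mul {N m : ℕ} (hm : m ≤ N) :
    ∑ a ∈ Icc 1 m, ∑ b ∈ Icc 1 (N / a), mertens (N / (a * b)) = m := by
  rw [sum_congr rfl fun a ha ↦
    sum_Icc_mertens_div_mul (mem_Icc.mp ha).1 ((mem_Icc.mp ha).2.trans hm)]
  simp

theorem sum_Icc_sqrt_sum_Icc_sqrt_mertens_div_mul (N : ℕ) :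
    ∑ i ∈ Icc 1 N.sqrt, ∑ j ∈ Icc 1 N.sqrt, mertens (N / (i * j)) = 2 * N.sqrt - N := by
  have h := sum_Icc_sum_Icc_div_hyperbola (fun a b ↦ mertens (N / (a * b)))
    (Nat.sqrt_le N) (Nat.lt_succ_sqrt N)
  have hrows := sum_Icc_sum_Icc_mertens_div_mul (Nat.sqrt_le_self N)
  have hcols : ∑ b ∈ Icc 1 N.sqrt, ∑ a ∈ Icc 1 (N / b), mertens (N / (a * b)) = N.sqrt := by
    rw [← hrows]
    exact sum_congr rfl fun b _ ↦ sum_congr rfl fun a _ ↦ by rw [Nat.mul_comm]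
  rw [sum_Icc_sum_Icc_mertens_div_mul le_rfl, hrows, hcols] at h
  linear_combination h

theorem stmt_5_general (x : ℕ) :
    ((x : ℤ) ^ 2) = 2 * (x : ℤ) -
      ∑ i ∈ Finset.Icc 1 x, ∑ j ∈ Finset.Icc 1 x, mertens (x ^ 2 / (i * j)) := by
  have h := sum_Icc_sqrt_sum_Icc_sqrt_mertens_div_mul (x ^ 2)
  rw [Nat.sqrt_eq'] at h
  rw [h]
  push_cast
  ring

theorem stmt_5 (x : ℕ) (hx : 0 < x) :
    ((x : ℤ) ^ 2) = 2 * (x : ℤ) -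
      ∑ i ∈ Finset.Icc 1 x, ∑ j ∈ Finset.Icc 1 x, mertens (x ^ 2 / (i * j)) :=
  stmt_5_general x
end

section
/- For every positive integer x, H_{x²} = 2·H_{x} − ∑_{i=1}^{x} ∑_{j=1}^{x} (1/(i·j)) · m_{⌊x²/(i·j)⌋}, where H_n = ∑_{k=1}^{n} 1/k is the n-th harmonic number and m_n = ∑_{k=1}^{n} μ(k)/k. -/
/-!
Expanding `m` and regrouping by `n = d k` gives the classical identity
`∑_{d ≤ y} m_{⌊y/d⌋} / d = 1` for `y ≥ 1`, because `∑_{k ∣ n} μ(k) = [n = 1]`.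
So along the hyperbola `i j ≤ N` the terms `m_{⌊N/(ij)⌋} / (ij)` sum to `1/i` on each row and
to `1/j` on each column. For `x = ⌊√N⌋` the square `i, j ≤ x` is the rows `i ≤ x` minus their
part `j > x`, and as `N < (x+1)²` that part is exactly the union of the columns `j > x`.
Hence the double sum is `H_x - (H_N - H_x)`; then take `N = x²`.
-/
open Finset ArithmeticFunction

/-- Harmonic number: `H_n = ∑_{k=1}^{n} 1/k`. -/
noncomputable def harmonicNum (n : ℕ) : ℝ :=
  ∑ k ∈ Finset.Icc 1 n, 1 / (k : ℝ)

/-- `m_n = ∑_{k=1}^{n} μ(k)/k`. -/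
noncomputable def mSum (n : ℕ) : ℝ :=
  ∑ k ∈ Finset.Icc 1 n, (moebius k : ℝ) / (k : ℝ)

open scoped ArithmeticFunction.zeta ArithmeticFunction.Moebius

namespace ArithmeticFunction

theorem mul_pmul_of_map_mul {R : Type*} [CommSemiring R] {w : ArithmeticFunction R}
    (hw : ∀ a b, w (a * b) = w a * w b) (f g : ArithmeticFunction R) :
    (f * g).pmul w = f.pmul w * g.pmul w := by
  ext n
  simp only [pmul_apply, mul_apply, sum_mul]
  refine sum_congr rfl fun p hp => ?_
  rw [← (Nat.mem_divisorsAntidiagonal.mp hp).1, hw]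
  ring

end ArithmeticFunction

noncomputable def reciprocal : ArithmeticFunction ℝ :=
  ⟨fun n => 1 / (n : ℝ), by simp⟩

theorem reciprocal_apply (n : ℕ) : reciprocal n = 1 / (n : ℝ) := rfl

theorem reciprocal_mul_pmul_moebius :
    reciprocal * (μ : ArithmeticFunction ℝ).pmul reciprocal = 1 := by
  have hmul : ∀ a b, reciprocal (a * b) = reciprocal a * reciprocal b := by
    intro a b
    simp only [reciprocal_apply, Nat.cast_mul]
    ring
  calc reciprocal * (μ : ArithmeticFunction ℝ).pmul reciprocal
      = ((ζ : ArithmeticFunction ℝ) * μ).pmul reciprocal := by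
        rw [mul_pmul_of_map_mul hmul, zeta_pmul]
    _ = 1 := by
      rw [coe_zeta_mul_coe_moebius]
      ext n
      by_cases hn : n = 1 <;> simp [pmul_apply, one_apply, hn, reciprocal_apply]

theorem sum_Icc_inv_mul_mSum_div {y : ℕ} (hy : 1 ≤ y) :
    ∑ d ∈ Icc 1 y, 1 / (d : ℝ) * mSum (y / d) = 1 := by
  have h := sum_Ioc_mul_eq_sum_sum reciprocal ((μ : ArithmeticFunction ℝ).pmul reciprocal) y
  rw [reciprocal_mul_pmul_moebius] at h
  simp only [← Icc_add_one_left_eq_Ioc, zero_add, one_apply, sum_ite_eq', mem_Icc, le_refl,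
    hy, and_self, if_true] at h
  refine Eq.trans (sum_congr rfl fun d _ => ?_) h.symm
  simp only [mSum, reciprocal_apply, pmul_apply, intCoe_apply, mul_one_div]

theorem sum_Icc_div_inv_mul_mSum_div {N i : ℕ} (hi : 0 < i) (hiN : i ≤ N) :
    ∑ j ∈ Icc 1 (N / i), 1 / ((i : ℝ) * j) * mSum (N / (i * j)) = 1 / i := by
  have hNi : 1 ≤ N / i := (Nat.one_le_div_iff hi).mpr hiN
  calc ∑ j ∈ Icc 1 (N / i), 1 / ((i : ℝ) * j) * mSum (N / (i * j))
      = 1 / i * ∑ j ∈ Icc 1 (N / i), 1 / (j : ℝ) * mSum (N / i / j) := by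
        rw [mul_sum]
        refine sum_congr rfl fun j _ => ?_
        rw [Nat.div_div_eq_div_mul, ← one_div_mul_one_div]
        ring
    _ = 1 / i := by rw [sum_Icc_inv_mul_mSum_div hNi, mul_one]

theorem sum_Icc_sum_Ioc_div_comm {M : Type*} [AddCommMonoid M] {N x : ℕ}
    (hN : N < (x + 1) * (x + 1)) (f : ℕ → ℕ → M) :
    ∑ i ∈ Icc 1 x, ∑ j ∈ Ioc x (N / i), f i j = ∑ j ∈ Ioc x N, ∑ i ∈ Icc 1 (N / j), f i j := by
  refine sum_comm' fun i j => ?_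
  simp only [mem_Icc, mem_Ioc]
  constructor
  · rintro ⟨⟨hi1, -⟩, hxj, hjN⟩
    rw [Nat.le_div_iff_mul_le hi1] at hjN
    exact ⟨⟨hi1, (Nat.le_div_iff_mul_le (by omega)).mpr (by linarith)⟩, hxj, by nlinarith⟩
  · rintro ⟨⟨hi1, hiN⟩, hxj, -⟩
    rw [Nat.le_div_iff_mul_le (by omega)] at hiN
    exact ⟨⟨hi1, by nlinarith⟩, hxj, (Nat.le_div_iff_mul_le hi1).mpr (by linarith)⟩

theorem sum_Icc_sqrt_sum_Icc_sqrt_inv_mul_mSum_div (N : ℕ) :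
    ∑ i ∈ Icc 1 N.sqrt, ∑ j ∈ Icc 1 N.sqrt, 1 / ((i : ℝ) * j) * mSum (N / (i * j)) =
      2 * harmonicNum N.sqrt - harmonicNum N := by
  set x := N.sqrt
  have hxx : x * x ≤ N := Nat.sqrt_le N
  have hNx : N < (x + 1) * (x + 1) := Nat.lt_succ_sqrt N
  have hxN : x ≤ N := le_trans (Nat.le_mul_self x) hxx
  have Icc_one_eq_Ioc_zero : ∀ n : ℕ, Icc 1 n = Ioc 0 n := Icc_add_one_left_eq_Ioc 0
  have h_rows : ∀ i ∈ Icc 1 x, ∑ j ∈ Icc 1 x, 1 / ((i : ℝ) * j) * mSum (N / (i * j)) =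
      1 / i - ∑ j ∈ Ioc x (N / i), 1 / ((i : ℝ) * j) * mSum (N / (i * j)) := by
    intro i hi
    obtain ⟨hi1, hix⟩ := mem_Icc.mp hi
    have hx : x ≤ N / i :=
      (Nat.le_div_iff_mul_le hi1).mpr (le_trans (Nat.mul_le_mul_left x hix) hxx)
    rw [← sum_Icc_div_inv_mul_mSum_div hi1 (le_trans hix hxN), Icc_one_eq_Ioc_zero,
      Icc_one_eq_Ioc_zero, ← sum_Ioc_consecutive _ (Nat.zero_le x) hx]
    ring
  have h_cols : ∀ j ∈ Ioc x N, ∑ i ∈ Icc 1 (N / j), 1 / ((i : ℝ) * j) * mSum (N / (i * j)) =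
      1 / j := by
    intro j hj
    obtain ⟨hxj, hjN⟩ := mem_Ioc.mp hj
    rw [← sum_Icc_div_inv_mul_mSum_div (by omega) hjN]
    refine sum_congr rfl fun i _ => ?_
    rw [mul_comm (i : ℝ), mul_comm i]
  have h_harmonic : harmonicNum N = harmonicNum x + ∑ j ∈ Ioc x N, 1 / (j : ℝ) := by
    rw [harmonicNum, harmonicNum, Icc_one_eq_Ioc_zero, Icc_one_eq_Ioc_zero,
      sum_Ioc_consecutive _ (Nat.zero_le x) hxN]
  rw [sum_congr rfl h_rows, sum_sub_distrib, sum_Icc_sum_Ioc_div_comm hNx,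
    sum_congr rfl h_cols, h_harmonic, harmonicNum]
  ring

theorem stmt_6_general (x : ℕ) :
    harmonicNum (x ^ 2) = 2 * harmonicNum x -
      ∑ i ∈ Finset.Icc 1 x, ∑ j ∈ Finset.Icc 1 x,
        (1 / ((i : ℝ) * (j : ℝ))) * mSum (x ^ 2 / (i * j)) := by
  have h := sum_Icc_sqrt_sum_Icc_sqrt_inv_mul_mSum_div (x ^ 2)
  rw [Nat.sqrt_eq'] at h
  linarith

theorem stmt_6 (x : ℕ) (hx : 0 < x) :
    harmonicNum (x ^ 2) = 2 * harmonicNum x -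
      ∑ i ∈ Finset.Icc 1 x, ∑ j ∈ Finset.Icc 1 x,
        (1 / ((i : ℝ) * (j : ℝ))) * mSum (x ^ 2 / (i * j)) :=
  stmt_6_general x
end

section
/- As x → ∞ through positive integers, ∑_{i=1}^{x} ∑_{j=1}^{x} (1/(i·j)) · m_{⌊x²/(i·j)⌋} = γ + O(1/x); that is, there exist constants C > 0 and x₁ such that for all integers x ≥ x₁, |∑_{i=1}^{x} ∑_{j=1}^{x} (1/(i·j)) · m_{⌊x²/(i·j)⌋} − γ| ≤ C/x, where γ is Euler's constant and m_n = ∑_{k=1}^{n} μ(k)/k. -/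
/-!
Write `F(i, j) = m_{⌊N/(ij)⌋} / (ij)` (`mTerm N i j`) with `N = x²`. Since `∑_{d ≤ y} m_{⌊y/d⌋} / d = 1`
for every `y ≥ 1` (the Dirichlet convolution of `1/n` and `μ(n)/n` is the unit), each row sum
`∑_{j ≤ N} F(i, j)` equals `1/i`. `F` is symmetric and vanishes when `ij > N`, in particular on
`(x, N]²`; inclusion–exclusion on rows and columns then gives `∑_{i, j ≤ x} F(i, j) = 2 H_x - H_{x²}`,
and `0 < H_n - log n - γ ≤ 1/n` turns this into `γ + O(1/x)`.
-/

open Finset ArithmeticFunction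

open scoped ArithmeticFunction.zeta ArithmeticFunction.Moebius

namespace ArithmeticFunction

theorem pdiv_id_mul_pdiv_id {R : Type*} [Semifield R] (f g : ArithmeticFunction R) :
    f.pdiv ↑ArithmeticFunction.id * g.pdiv ↑ArithmeticFunction.id =
      (f * g).pdiv ↑ArithmeticFunction.id := by
  ext n
  simp only [mul_apply, pdiv_apply, natCoe_apply, id_apply, sum_div]
  refine sum_congr rfl fun p hp => ?_
  rw [← (Nat.mem_divisorsAntidiagonal.1 hp).1, Nat.cast_mul, div_mul_div_comm]

end ArithmeticFunction

@[simp]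
theorem mSum_zero : mSum 0 = 0 := by
  simp [mSum]

theorem sum_one_div_mul_mSum_div {N M : ℕ} (hN : 1 ≤ N) (hNM : N ≤ M) :
    ∑ d ∈ Icc 1 M, 1 / (d : ℝ) * mSum (N / d) = 1 := by
  have hconv := sum_Ioc_mul_eq_sum_sum ((ζ : ArithmeticFunction ℝ).pdiv ↑ArithmeticFunction.id)
    ((μ : ArithmeticFunction ℝ).pdiv ↑ArithmeticFunction.id) N
  rw [pdiv_id_mul_pdiv_id, coe_zeta_mul_coe_moebius] at hconv
  simp only [pdiv_apply, natCoe_apply, id_apply, intCoe_apply, one_apply] at hconv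
  calc ∑ d ∈ Icc 1 M, 1 / (d : ℝ) * mSum (N / d)
      = ∑ d ∈ Icc 1 N, 1 / (d : ℝ) * mSum (N / d) := by
        refine (sum_subset (Icc_subset_Icc_right hNM) fun d hd hdN => ?_).symm
        rw [Nat.div_eq_of_lt (by simp_all), mSum_zero, mul_zero]
    _ = ∑ n ∈ Ioc 0 N, (if n = 1 then 1 else 0) / (n : ℝ) := by
        rw [hconv, ← Icc_add_one_left_eq_Ioc, zero_add]
        refine sum_congr rfl fun d hd => ?_
        rw [zeta_apply_ne (by simp at hd; omega), mSum, ← Icc_add_one_left_eq_Ioc, zero_add]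
        push_cast
        rw [div_eq_mul_one_div]
    _ = 1 := by
        rw [sum_eq_single_of_mem 1 (by simpa using hN) fun n _ hn => by simp [hn]]
        simp

noncomputable def mTerm (N i j : ℕ) : ℝ :=
  1 / ((i : ℝ) * (j : ℝ)) * mSum (N / (i * j))

theorem mTerm_comm (N i j : ℕ) : mTerm N i j = mTerm N j i := by
  rw [mTerm, mTerm, mul_comm i, mul_comm (i : ℝ)]

theorem mTerm_eq_zero_of_lt {N i j : ℕ} (h : N < i * j) : mTerm N i j = 0 := by
  rw [mTerm, Nat.div_eq_of_lt h, mSum_zero, mul_zero]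

theorem sum_mTerm_row {N i : ℕ} (hi : 1 ≤ i) (hiN : i ≤ N) :
    ∑ j ∈ Icc 1 N, mTerm N i j = 1 / (i : ℝ) := by
  have hrow (j : ℕ) : mTerm N i j = 1 / (i : ℝ) * (1 / (j : ℝ) * mSum (N / i / j)) := by
    rw [mTerm, Nat.div_div_eq_div_mul, ← one_div_mul_one_div, mul_assoc]
  simp_rw [hrow, ← mul_sum]
  rw [sum_one_div_mul_mSum_div ((Nat.one_le_div_iff hi).2 hiN) (Nat.div_le_self N i), mul_one]

theorem cast_harmonic_eq_sum_Icc (n : ℕ) : (harmonic n : ℝ) = ∑ i ∈ Icc 1 n, 1 / (i : ℝ) := by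
  simp [harmonic_eq_sum_Icc]

theorem sum_mTerm_square {x : ℕ} (hx : 1 ≤ x) :
    ∑ i ∈ Icc 1 x, ∑ j ∈ Icc 1 x, mTerm (x ^ 2) i j = 2 * harmonic x - (harmonic (x ^ 2) : ℝ) := by
  set N := x ^ 2 with hN
  set X := Icc 1 x
  set R := Icc 1 N
  have hXR : X ⊆ R := Icc_subset_Icc_right (Nat.le_self_pow two_ne_zero x)
  have hrows (s : Finset ℕ) (hs : s ⊆ R) : ∑ i ∈ s, ∑ j ∈ R, mTerm N i j = ∑ i ∈ s, 1 / (i : ℝ) :=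
    sum_congr rfl fun i hi => by
      obtain ⟨hi1, hiN⟩ := mem_Icc.1 (hs hi)
      exact sum_mTerm_row hi1 hiN
  have hcols : ∑ i ∈ R, ∑ j ∈ X, mTerm N i j = ∑ i ∈ X, 1 / (i : ℝ) := by
    rw [sum_comm, ← hrows X hXR]
    simp_rw [mTerm_comm N _]
  have hcorner : ∑ i ∈ R \ X, ∑ j ∈ R \ X, mTerm N i j = 0 :=
    sum_eq_zero fun i hi => sum_eq_zero fun j hj => mTerm_eq_zero_of_lt <| by
      simp only [X, R, mem_sdiff, mem_Icc, not_and, not_le] at hi hj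
      nlinarith [hi.2 hi.1.1, hj.2 hj.1.1]
  have hsplit_rows := sum_sdiff hXR (f := fun i => ∑ j ∈ R, mTerm N i j)
  have hsplit_cols := sum_sdiff hXR (f := fun i => ∑ j ∈ X, mTerm N i j)
  have hsplit_corner : ∑ i ∈ R \ X, ∑ j ∈ R, mTerm N i j =
      ∑ i ∈ R \ X, ∑ j ∈ R \ X, mTerm N i j + ∑ i ∈ R \ X, ∑ j ∈ X, mTerm N i j := by
    rw [← sum_add_distrib]
    exact sum_congr rfl fun i _ => (sum_sdiff hXR).symm
  rw [cast_harmonic_eq_sum_Icc, cast_harmonic_eq_sum_Icc]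
  linarith [hrows R subset_rfl, hrows X hXR]

theorem harmonic_sub_log_sub_eulerMascheroniConstant_mem_Ioc {n : ℕ} (hn : n ≠ 0) :
    (harmonic n : ℝ) - Real.log n - Real.eulerMascheroniConstant ∈ Set.Ioc 0 (1 / (n : ℝ)) := by
  have hlower := Real.eulerMascheroniConstant_lt_eulerMascheroniSeq' n
  have hupper := Real.eulerMascheroniSeq_lt_eulerMascheroniConstant n
  rw [Real.eulerMascheroniSeq', if_neg hn] at hlower
  rw [Real.eulerMascheroniSeq] at hupper
  have hn' : (0 : ℝ) < n := by positivity
  have hlog : Real.log ((n : ℝ) + 1) - Real.log n ≤ 1 / n := by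
    have h := Real.log_le_sub_one_of_pos (x := ((n : ℝ) + 1) / n) (by positivity)
    rwa [Real.log_div (by positivity) hn'.ne', add_div, div_self hn'.ne', add_sub_cancel_left] at h
  constructor <;> linarith

theorem stmt_7 :
    ∃ C : ℝ, 0 < C ∧ ∃ x₁ : ℕ, ∀ x : ℕ, x₁ ≤ x →
      |(∑ i ∈ Finset.Icc 1 x, ∑ j ∈ Finset.Icc 1 x,
          (1 / ((i : ℝ) * (j : ℝ))) * mSum (x ^ 2 / (i * j))) -
        Real.eulerMascheroniConstant| ≤ C / x := by
  refine ⟨2, two_pos, 1, fun x hx => ?_⟩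
  have hsum := sum_mTerm_square hx
  simp only [mTerm] at hsum
  obtain ⟨hx_pos, hx_le⟩ := harmonic_sub_log_sub_eulerMascheroniConstant_mem_Ioc (n := x) (by omega)
  obtain ⟨hx2_pos, hx2_le⟩ :=
    harmonic_sub_log_sub_eulerMascheroniConstant_mem_Ioc (n := x ^ 2) (by positivity)
  rw [Nat.cast_pow, Real.log_pow, Nat.cast_ofNat] at hx2_pos hx2_le
  have hx_one : (1 : ℝ) ≤ x := by exact_mod_cast hx
  have hinv_sq : 1 / (x : ℝ) ^ 2 ≤ 1 / x :=
    one_div_le_one_div_of_le (by positivity) (by nlinarith)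
  rw [hsum, abs_le, div_eq_mul_one_div]
  constructor <;> linarith
end

section
/- The limit, as the positive integer x tends to infinity, of ∑_{i=1}^{x} ∑_{j=1}^{x} (1/(i·j)) · m_{⌊x²/(i·j)⌋} exists and equals Euler's constant γ, where m_n = ∑_{k=1}^{n} μ(k)/k. -/
/-!
Since `∑_{d ∣ n} μ(d) = [n = 1]`, one has `∑_{j ≤ y} m_{⌊y/j⌋} / j = 1` for `y ≥ 1`. Hence, summing
`m_{⌊N/(ij)⌋} / (ij)` over the lattice points of the hyperbola `ij ≤ N`, each row `i` contributes
`1/i`. For `N = x²` the hyperbola is the square `[1, x]²` together with the two strips `i > x` and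
`j > x`, and each strip sums to `H_{x²} - H_x`. So the double sum is
`2 H_x - H_{x²} = 2 (H_x - log x) - (H_{x²} - log x²) → 2γ - γ = γ`.
-/

open Finset ArithmeticFunction Filter

theorem ArithmeticFunction.pmul_mul_pmul_of_map_mul {R : Type*} [CommSemiring R]
    {w : ArithmeticFunction R} (hw : ∀ a b, w (a * b) = w a * w b)
    (f g : ArithmeticFunction R) : f.pmul w * g.pmul w = (f * g).pmul w := by
  ext n
  simp only [mul_apply, pmul_apply, sum_mul]
  refine sum_congr rfl fun p hp => ?_
  rw [← (Nat.mem_divisorsAntidiagonal.1 hp).1, hw]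
  ring

noncomputable def natInv : ArithmeticFunction ℝ := ⟨fun n => (n : ℝ)⁻¹, by simp⟩

theorem natInv_apply (n : ℕ) : natInv n = (n : ℝ)⁻¹ := rfl

theorem natInv_mul (a b : ℕ) : natInv (a * b) = natInv a * natInv b := by
  simp only [natInv_apply, Nat.cast_mul, mul_inv]

theorem mSum_eq_sum_Ioc (n : ℕ) : mSum n = ∑ k ∈ Ioc 0 n, (moebius k : ℝ) / k := rfl

theorem sum_Ioc_inv_mul_mSum_div {y : ℕ} (hy : 0 < y) :
    ∑ n ∈ Ioc 0 y, (n : ℝ)⁻¹ * mSum (y / n) = 1 := by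
  -- `ζ * μ = 1`, twisted by the completely multiplicative `n ↦ 1/n`
  have hconv : (zeta : ArithmeticFunction ℝ).pmul natInv
      * (moebius : ArithmeticFunction ℝ).pmul natInv = 1 := by
    rw [pmul_mul_pmul_of_map_mul natInv_mul, coe_zeta_mul_coe_moebius]
    ext n
    by_cases hn : n = 1 <;> simp [pmul_apply, one_apply, natInv_apply, hn]
  have := sum_Ioc_mul_eq_sum_sum ((zeta : ArithmeticFunction ℝ).pmul natInv)
    ((moebius : ArithmeticFunction ℝ).pmul natInv) y
  rw [hconv] at this
  simpa [one_apply, hy.ne', Nat.one_le_iff_ne_zero, mSum_eq_sum_Ioc, div_eq_mul_inv,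
    pmul_apply, natInv_apply] using this.symm

theorem sum_Ioc_sq_eq_sum_hyperbola_sub {M : Type*} [AddCommGroup M] (F : ℕ → ℕ → M) (x : ℕ) :
    ∑ i ∈ Ioc 0 x, ∑ j ∈ Ioc 0 x, F i j
      = ∑ i ∈ Ioc 0 x, ∑ j ∈ Ioc 0 (x ^ 2 / i), F i j
        - ∑ j ∈ Ioc x (x ^ 2), ∑ i ∈ Ioc 0 (x ^ 2 / j), F i j := by
  have hsplit : ∀ i ∈ Ioc 0 x, ∑ j ∈ Ioc 0 (x ^ 2 / i), F i j
      = ∑ j ∈ Ioc 0 x, F i j + ∑ j ∈ Ioc x (x ^ 2 / i), F i j := by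
    intro i hi
    rw [mem_Ioc] at hi
    refine (sum_Ioc_consecutive _ (Nat.zero_le x) ?_).symm
    rw [Nat.le_div_iff_mul_le hi.1, sq]
    exact Nat.mul_le_mul_left x hi.2
  have hswap : ∑ i ∈ Ioc 0 x, ∑ j ∈ Ioc x (x ^ 2 / i), F i j
      = ∑ j ∈ Ioc x (x ^ 2), ∑ i ∈ Ioc 0 (x ^ 2 / j), F i j := by
    refine sum_comm' fun i j => ?_
    simp only [mem_Ioc]
    constructor
    · rintro ⟨⟨hi, hix⟩, hxj, hj⟩
      rw [Nat.le_div_iff_mul_le hi] at hj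
      rw [Nat.le_div_iff_mul_le (by omega)]
      refine ⟨⟨hi, by linarith⟩, hxj, by nlinarith⟩
    · rintro ⟨⟨hi, hij⟩, hxj, hj⟩
      rw [Nat.le_div_iff_mul_le (by omega)] at hij
      rw [Nat.le_div_iff_mul_le hi]
      refine ⟨⟨hi, by nlinarith⟩, hxj, by linarith⟩
  rw [sum_congr rfl hsplit, sum_add_distrib, hswap, add_sub_cancel_right]

theorem sum_Ioc_one_div_mul_mSum_div_mul {N i : ℕ} (hi : 0 < i) (hiN : i ≤ N) :
    ∑ j ∈ Ioc 0 (N / i), 1 / ((i : ℝ) * j) * mSum (N / (i * j)) = (i : ℝ)⁻¹ := by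
  simp_rw [← Nat.div_div_eq_div_mul, one_div, mul_inv, mul_assoc, ← mul_sum,
    sum_Ioc_inv_mul_mSum_div (Nat.div_pos hiN hi), mul_one]

theorem harmonic_eq_sum_Ioc (n : ℕ) : (harmonic n : ℝ) = ∑ i ∈ Ioc 0 n, (i : ℝ)⁻¹ := by
  rw [harmonic_eq_sum_Icc]
  push_cast
  rfl

theorem sum_Icc_sum_Icc_mSum_eq_two_harmonic_sub (x : ℕ) :
    ∑ i ∈ Icc 1 x, ∑ j ∈ Icc 1 x, (1 / ((i : ℝ) * (j : ℝ))) * mSum (x ^ 2 / (i * j))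
      = 2 * harmonic x - harmonic (x ^ 2) := by
  have hx : x ≤ x ^ 2 := Nat.le_self_pow two_ne_zero x
  have hrow : ∀ i ∈ Ioc 0 x, ∑ j ∈ Ioc 0 (x ^ 2 / i),
      1 / ((i : ℝ) * j) * mSum (x ^ 2 / (i * j)) = (i : ℝ)⁻¹ := fun i hi =>
    sum_Ioc_one_div_mul_mSum_div_mul (mem_Ioc.1 hi).1 ((mem_Ioc.1 hi).2.trans hx)
  have hcol : ∀ j ∈ Ioc x (x ^ 2), ∑ i ∈ Ioc 0 (x ^ 2 / j),
      1 / ((i : ℝ) * j) * mSum (x ^ 2 / (i * j)) = (j : ℝ)⁻¹ := by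
    intro j hj
    rw [mem_Ioc] at hj
    simp_rw [mul_comm _ (j : ℝ), mul_comm _ j]
    exact sum_Ioc_one_div_mul_mSum_div_mul ((Nat.zero_le x).trans_lt hj.1) hj.2
  rw [show Icc 1 x = Ioc 0 x from rfl, sum_Ioc_sq_eq_sum_hyperbola_sub, sum_congr rfl hrow,
    sum_congr rfl hcol, harmonic_eq_sum_Ioc, harmonic_eq_sum_Ioc,
    ← sum_Ioc_consecutive _ (Nat.zero_le x) hx]
  ring

theorem stmt_8 :
    Tendsto (fun x : ℕ => ∑ i ∈ Finset.Icc 1 x, ∑ j ∈ Finset.Icc 1 x,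
        (1 / ((i : ℝ) * (j : ℝ))) * mSum (x ^ 2 / (i * j)))
      atTop (nhds Real.eulerMascheroniConstant) := by
  have hH := Real.tendsto_harmonic_sub_log
  have hlim := (hH.const_mul 2).sub (hH.comp (tendsto_pow_atTop two_ne_zero))
  rw [two_mul, add_sub_cancel_right] at hlim
  refine hlim.congr fun x => ?_
  simp only [Function.comp_apply, sum_Icc_sum_Icc_mSum_eq_two_harmonic_sub, Nat.cast_pow,
    Real.log_pow]
  ring
end

section
/- For every real number s and every positive integer x, ∑_{j=x+1}^{x²} (μ(j)/j^s) · ∑_{i=1}^{x} (μ(i)/i^s) · H_{⌊x²/(i·j)⌋}(s) = M_{x²}(s) − M_{x}(s). -/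
open Finset ArithmeticFunction

/-!
Expanding `H` and collecting the terms `i k = n` turns `∑_{i ≤ m} μ(i) i^{-s} H_{⌊m/i⌋}(s)` into
`∑_{n ≤ m} (μ * 1)(n) n^{-s} = 1` (for `m ≥ 1`); terms with `i > m` vanish, so the sum may run
up to any `K ≥ m`. For `x < j ≤ x²` take `m = ⌊x²/j⌋ ≤ x` and `K = x`: each inner sum on the left
is `1`, and what remains is `∑_{x < j ≤ x²} μ(j) j^{-s} = M_{x²}(s) - M_x(s)`.
-/

namespace ArithmeticFunction

theorem pmul_mul_pmul_of_map_mul_s9 {R : Type*} [CommSemiring R] (f g w : ArithmeticFunction R)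
    (hw : ∀ m n, w (m * n) = w m * w n) : f.pmul w * g.pmul w = (f * g).pmul w := by
  ext n
  simp only [mul_apply, pmul_apply, sum_mul]
  refine sum_congr rfl fun p hp => ?_
  rw [← (Nat.mem_divisorsAntidiagonal.mp hp).1, hw]
  ring

noncomputable def invRpow (s : ℝ) : ArithmeticFunction ℝ :=
  toArithmeticFunction fun n ↦ 1 / (n : ℝ) ^ s

theorem invRpow_apply (s : ℝ) {n : ℕ} (hn : n ≠ 0) : invRpow s n = 1 / (n : ℝ) ^ s :=
  if_neg hn

theorem invRpow_mul (s : ℝ) (m n : ℕ) : invRpow s (m * n) = invRpow s m * invRpow s n := by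
  rcases eq_or_ne m 0 with rfl | hm
  · simp
  rcases eq_or_ne n 0 with rfl | hn
  · simp
  rw [invRpow_apply s hm, invRpow_apply s hn, invRpow_apply s (mul_ne_zero hm hn), Nat.cast_mul,
    Real.mul_rpow m.cast_nonneg n.cast_nonneg, one_div_mul_one_div]

end ArithmeticFunction

theorem Hgen_zero (s : ℝ) : Hgen s 0 = 0 := by simp [Hgen]

theorem Hgen_eq_sum_Ioc_invRpow (s : ℝ) (n : ℕ) : Hgen s n = ∑ k ∈ Ioc 0 n, invRpow s k := by
  rw [Hgen, Nat.Icc_one_eq_Ioc_zero]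
  exact sum_congr rfl fun k hk => (invRpow_apply s (mem_Ioc.mp hk).1.ne').symm

theorem sum_Ioc_moebius_pmul_invRpow_mul_Hgen_div (s : ℝ) {m : ℕ} (hm : m ≠ 0) :
    ∑ j ∈ Ioc 0 m, (moebius : ArithmeticFunction ℝ).pmul (invRpow s) j * Hgen s (m / j) = 1 := by
  have hsum := sum_Ioc_mul_eq_sum_sum ((moebius : ArithmeticFunction ℝ).pmul (invRpow s))
    ((zeta : ArithmeticFunction ℝ).pmul (invRpow s)) m
  rw [pmul_mul_pmul_of_map_mul_s9 _ _ _ (invRpow_mul s), coe_moebius_mul_coe_zeta, zeta_pmul] at hsum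
  simp_rw [Hgen_eq_sum_Ioc_invRpow, ← hsum]
  rw [sum_eq_single_of_mem 1 (mem_Ioc.mpr ⟨one_pos, Nat.one_le_iff_ne_zero.mpr hm⟩)
    fun n _ hn => by simp [one_apply_ne hn]]
  simp [invRpow_apply]

theorem sum_moebius_div_rpow_mul_Hgen_div (s : ℝ) {m K : ℕ} (hm : m ≠ 0) (hmK : m ≤ K) :
    ∑ i ∈ Icc 1 K, (moebius i : ℝ) / (i : ℝ) ^ s * Hgen s (m / i) = 1 := by
  rw [← sum_subset (Icc_subset_Icc_right hmK) fun i hi hi' => ?_, Nat.Icc_one_eq_Ioc_zero,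
    ← sum_Ioc_moebius_pmul_invRpow_mul_Hgen_div s hm]
  · refine sum_congr rfl fun i hi => ?_
    rw [pmul_apply, intCoe_apply, invRpow_apply s (mem_Ioc.mp hi).1.ne', mul_one_div]
  · simp only [mem_Icc, not_and, not_le] at hi hi'
    rw [Nat.div_eq_of_lt (hi' hi.1), Hgen_zero, mul_zero]

theorem Mgen_sub_Mgen (s : ℝ) {a b : ℕ} (hab : a ≤ b) :
    Mgen s b - Mgen s a = ∑ k ∈ Icc (a + 1) b, (moebius k : ℝ) / (k : ℝ) ^ s := by
  simp only [Mgen, Nat.Icc_one_eq_Ioc_zero, Icc_add_one_left_eq_Ioc]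
  rw [← sum_Ioc_consecutive _ (Nat.zero_le a) hab, add_sub_cancel_left]

theorem stmt_9_general (s : ℝ) (x : ℕ) :
    ∑ j ∈ Finset.Icc (x + 1) (x ^ 2), ((moebius j : ℝ) / (j : ℝ) ^ s) *
      ∑ i ∈ Finset.Icc 1 x, ((moebius i : ℝ) / (i : ℝ) ^ s) * Hgen s (x ^ 2 / (i * j)) =
    Mgen s (x ^ 2) - Mgen s x := by
  have inner : ∀ j ∈ Icc (x + 1) (x ^ 2),
      ∑ i ∈ Icc 1 x, (moebius i : ℝ) / (i : ℝ) ^ s * Hgen s (x ^ 2 / (i * j)) = 1 := by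
    intro j hj
    obtain ⟨hxj, hjx⟩ := mem_Icc.mp hj
    simp_rw [mul_comm _ j, ← Nat.div_div_eq_div_mul]
    refine sum_moebius_div_rpow_mul_Hgen_div s (Nat.div_pos hjx (by omega)).ne' ?_
    exact Nat.div_le_of_le_mul (by rw [sq]; exact Nat.mul_le_mul_right x (by omega))
  rw [sum_congr rfl fun j hj => by rw [inner j hj, mul_one],
    Mgen_sub_Mgen s (Nat.le_self_pow two_ne_zero x)]

theorem stmt_9 (s : ℝ) (x : ℕ) (hx : 0 < x) :
    ∑ j ∈ Finset.Icc (x + 1) (x ^ 2), ((moebius j : ℝ) / (j : ℝ) ^ s) *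
      ∑ i ∈ Finset.Icc 1 x, ((moebius i : ℝ) / (i : ℝ) ^ s) * Hgen s (x ^ 2 / (i * j)) =
    Mgen s (x ^ 2) - Mgen s x :=
  stmt_9_general s x
end

section
/- For every positive integer x, m_{x²} = 2·m_{x} − ∑_{i=1}^{x} ∑_{j=1}^{x} (μ(i)·μ(j)/(i·j)) · H_{⌊x²/(i·j)⌋}, where m_n = ∑_{k=1}^{n} μ(k)/k and H_n = ∑_{k=1}^{n} 1/k. -/
open Finset ArithmeticFunction

/-!
Let `F(i, j) = μ(i) μ(j) / (i j) · H_{⌊x² / (i j)⌋}`. Twisting `μ * 1 = δ` by the completely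
multiplicative `n ↦ 1/n` gives `∑_{d ≤ N} μ(d)/d · H_{⌊N/d⌋} = 1` for `N ≥ 1`, so summing
`F` over `i j ≤ x²` with the inner variable summed first leaves `∑ μ(i)/i` over the range of
the outer one. Hence the whole hyperbola `i j ≤ x²` contributes `m_{x²}` and each of the
strips `i ≤ x`, `j ≤ x` contributes `m_x`; the strips cover the hyperbola and overlap in the
square `[1, x]²`.
-/

lemma sum_divisors_moebius_real (n : ℕ) :
    ∑ d ∈ n.divisors, (moebius d : ℝ) = if n = 1 then 1 else 0 := by
  rw [← one_apply, ← coe_moebius_mul_coe_zeta, coe_mul_zeta_apply]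
  simp only [intCoe_apply]

lemma sum_divisors_moebius_div_mul_inv_div (n : ℕ) :
    ∑ d ∈ n.divisors, (moebius d : ℝ) / d * (1 / (n / d : ℕ)) = if n = 1 then 1 else 0 := by
  have hterm : ∀ d ∈ n.divisors,
      (moebius d : ℝ) / d * (1 / (n / d : ℕ)) = moebius d / n := by
    intro d hd
    have hn : (d : ℝ) * (n / d : ℕ) = n := by
      exact_mod_cast Nat.mul_div_cancel' (Nat.dvd_of_mem_divisors hd)
    rw [← hn]
    ring
  rw [sum_congr rfl hterm, ← sum_div, sum_divisors_moebius_real]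
  split_ifs with h <;> simp [h]

lemma sum_moebius_div_mul_harmonicNum_div {N : ℕ} (hN : 0 < N) :
    ∑ d ∈ Icc 1 N, (moebius d : ℝ) / d * harmonicNum (N / d) = 1 := by
  let f : ArithmeticFunction ℝ := ⟨fun n => (moebius n : ℝ) / n, by simp⟩
  let g : ArithmeticFunction ℝ := ⟨fun n => 1 / (n : ℝ), by simp⟩
  have hfg : f * g = 1 := by
    ext n
    rw [mul_apply, Nat.sum_divisorsAntidiagonal (fun a b => f a * g b), one_apply]
    exact sum_divisors_moebius_div_mul_inv_div n
  have hsum := sum_Ioc_mul_eq_sum_sum f g N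
  simp only [hfg, one_apply, sum_ite_eq', ← Icc_add_one_left_eq_Ioc] at hsum
  simpa [f, g, harmonicNum, Nat.one_le_iff_ne_zero.mpr hN.ne'] using hsum.symm

lemma sum_Icc_sum_Icc_div_moebius_mul_harmonicNum {M N : ℕ} (hMN : M ≤ N) :
    ∑ i ∈ Icc 1 M, ∑ j ∈ Icc 1 (N / i),
      (moebius i : ℝ) * moebius j / (i * j) * harmonicNum (N / (i * j)) = mSum M := by
  refine sum_congr rfl fun i hi => ?_
  have hiN : 0 < N / i := by
    rw [mem_Icc] at hi
    exact (Nat.one_le_div_iff hi.1).2 (hi.2.trans hMN)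
  rw [← mul_one ((moebius i : ℝ) / i), ← sum_moebius_div_mul_harmonicNum_div hiN, mul_sum]
  refine sum_congr rfl fun j _ => ?_
  rw [Nat.div_div_eq_div_mul]
  ring

def hyperbolaRegion (N : ℕ) : Finset (ℕ × ℕ) :=
  {p ∈ Icc 1 N ×ˢ Icc 1 N | p.1 * p.2 ≤ N}

lemma mem_hyperbolaRegion {N : ℕ} {p : ℕ × ℕ} :
    p ∈ hyperbolaRegion N ↔ 1 ≤ p.1 ∧ 1 ≤ p.2 ∧ p.1 * p.2 ≤ N := by
  obtain ⟨i, j⟩ := p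
  simp only [hyperbolaRegion, mem_filter, mem_product, mem_Icc]
  constructor
  · rintro ⟨⟨⟨hi, -⟩, hj, -⟩, hij⟩
    exact ⟨hi, hj, hij⟩
  · rintro ⟨hi, hj, hij⟩
    exact ⟨⟨⟨hi, by nlinarith⟩, hj, by nlinarith⟩, hij⟩

lemma mem_hyperbolaRegion_iff_mem_Icc_div {N : ℕ} {p : ℕ × ℕ} :
    p ∈ hyperbolaRegion N ↔ p.1 ∈ Icc 1 N ∧ p.2 ∈ Icc 1 (N / p.1) := by
  rw [mem_hyperbolaRegion]
  simp only [mem_Icc]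
  constructor
  · rintro ⟨hi, hj, hij⟩
    exact ⟨⟨hi, by nlinarith⟩, hj, by rwa [Nat.le_div_iff_mul_le hi, mul_comm]⟩
  · rintro ⟨⟨hi, -⟩, hj, hjN⟩
    exact ⟨hi, hj, by rwa [mul_comm, ← Nat.le_div_iff_mul_le hi]⟩

lemma filter_fst_le_sqrt_union_filter_snd_le_sqrt_hyperbolaRegion (N : ℕ) :
    {p ∈ hyperbolaRegion N | p.1 ≤ N.sqrt} ∪ {p ∈ hyperbolaRegion N | p.2 ≤ N.sqrt} =
      hyperbolaRegion N := by
  rw [← filter_or, filter_true_of_mem]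
  rintro ⟨i, j⟩ hp
  by_contra! h
  have hN := Nat.lt_succ_sqrt N
  have := mem_hyperbolaRegion.1 hp
  nlinarith

lemma filter_fst_le_sqrt_inter_filter_snd_le_sqrt_hyperbolaRegion (N : ℕ) :
    {p ∈ hyperbolaRegion N | p.1 ≤ N.sqrt} ∩ {p ∈ hyperbolaRegion N | p.2 ≤ N.sqrt} =
      Icc 1 N.sqrt ×ˢ Icc 1 N.sqrt := by
  have hN := Nat.sqrt_le N
  ext ⟨i, j⟩
  simp only [← filter_and, mem_filter, mem_hyperbolaRegion, mem_product, mem_Icc]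
  constructor
  · rintro ⟨⟨hi, hj, -⟩, hix, hjx⟩
    exact ⟨⟨hi, hix⟩, hj, hjx⟩
  · rintro ⟨⟨hi, hix⟩, hj, hjx⟩
    exact ⟨⟨hi, hj, by nlinarith⟩, hix, hjx⟩

lemma sum_Icc_sum_Icc_div_hyperbola_s12 {M : Type*} [AddCommGroup M] (f : ℕ → ℕ → M) (N : ℕ) :
    ∑ i ∈ Icc 1 N, ∑ j ∈ Icc 1 (N / i), f i j =
      ∑ i ∈ Icc 1 N.sqrt, ∑ j ∈ Icc 1 (N / i), f i j +
        ∑ j ∈ Icc 1 N.sqrt, ∑ i ∈ Icc 1 (N / j), f i j -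
          ∑ i ∈ Icc 1 N.sqrt, ∑ j ∈ Icc 1 N.sqrt, f i j := by
  have hxN := Nat.sqrt_le_self N
  have hsum := sum_union_inter (f := fun p : ℕ × ℕ => f p.1 p.2)
    (s₁ := {p ∈ hyperbolaRegion N | p.1 ≤ N.sqrt})
    (s₂ := {p ∈ hyperbolaRegion N | p.2 ≤ N.sqrt})
  rw [filter_fst_le_sqrt_union_filter_snd_le_sqrt_hyperbolaRegion,
    filter_fst_le_sqrt_inter_filter_snd_le_sqrt_hyperbolaRegion, sum_product,
    sum_finset_product' (hyperbolaRegion N) (Icc 1 N) (fun i => Icc 1 (N / i))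
      fun _ => mem_hyperbolaRegion_iff_mem_Icc_div,
    sum_finset_product' _ (Icc 1 N.sqrt) (fun i => Icc 1 (N / i)) fun p => ?strip₁,
    sum_finset_product_right' _ (Icc 1 N.sqrt) (fun j => Icc 1 (N / j)) fun p => ?strip₂]
    at hsum
  · rw [← hsum, add_sub_cancel_right]
  case strip₁ =>
    rw [mem_filter, mem_hyperbolaRegion_iff_mem_Icc_div]
    simp only [mem_Icc]
    omega
  case strip₂ =>
    have hswap := mem_hyperbolaRegion_iff_mem_Icc_div (N := N) (p := p.swap)
    simp only [mem_filter, mem_hyperbolaRegion, mem_Icc, Prod.fst_swap, Prod.snd_swap,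
      mul_comm p.2] at hswap ⊢
    omega

theorem stmt_12_general (x : ℕ) :
    mSum (x ^ 2) = 2 * mSum x -
      ∑ i ∈ Finset.Icc 1 x, ∑ j ∈ Finset.Icc 1 x,
        ((moebius i : ℝ) * (moebius j : ℝ) / ((i : ℝ) * (j : ℝ))) *
          harmonicNum (x ^ 2 / (i * j)) := by
  have hx : x ≤ x ^ 2 := Nat.le_self_pow two_ne_zero x
  have hyperbola := sum_Icc_sum_Icc_div_hyperbola_s12
    (fun i j => (moebius i : ℝ) * moebius j / (i * j) * harmonicNum (x ^ 2 / (i * j))) (x ^ 2)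
  have hstrip : ∑ j ∈ Icc 1 x, ∑ i ∈ Icc 1 (x ^ 2 / j),
      (moebius i : ℝ) * moebius j / (i * j) * harmonicNum (x ^ 2 / (i * j)) = mSum x := by
    refine Eq.trans (sum_congr rfl fun j _ => sum_congr rfl fun i _ => ?_)
      (sum_Icc_sum_Icc_div_moebius_mul_harmonicNum hx)
    rw [Nat.mul_comm i j]
    ring
  rw [Nat.sqrt_eq', hstrip, sum_Icc_sum_Icc_div_moebius_mul_harmonicNum le_rfl,
    sum_Icc_sum_Icc_div_moebius_mul_harmonicNum hx] at hyperbola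
  rw [hyperbola]
  ring

theorem stmt_12 (x : ℕ) (hx : 0 < x) :
    mSum (x ^ 2) = 2 * mSum x -
      ∑ i ∈ Finset.Icc 1 x, ∑ j ∈ Finset.Icc 1 x,
        ((moebius i : ℝ) * (moebius j : ℝ) / ((i : ℝ) * (j : ℝ))) *
          harmonicNum (x ^ 2 / (i * j)) :=
  stmt_12_general x
end

section
/- For every positive integer x, M(x²) = 2·M(x) − ∑_{i=1}^{x} ∑_{j=1}^{x} μ(i)·μ(j)·⌊x²/(i·j)⌋, where M(n) = ∑_{k=1}^{n} μ(k) is the Mertens function. -/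
open Finset ArithmeticFunction

/-!
Since `μ * ζ = ε`, `∑_{d ≤ y} μ(d) ⌊y/d⌋ = 1` for every `y ≥ 1`; summing this against `μ(i)` with
`y = ⌊N/i⌋` gives `M(N) = ∑_{ij ≤ N} μ(i) μ(j) ⌊N/(ij)⌋`. For `N = x²` the hyperbola `ij ≤ N` is
the union of its parts `i ≤ x` and `j ≤ x`, which overlap in the square `[1, x]²`, and the same
identity shows that each of the two parts sums to `M(x)`.
-/

def hyperbola (N : ℕ) : Finset (ℕ × ℕ) :=
  {p ∈ Icc 1 N ×ˢ Icc 1 N | p.1 * p.2 ≤ N}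

section Hyperbola

variable {M : Type*} [AddCommGroup M] (f : ℕ → ℕ → M) (N : ℕ)

theorem sum_hyperbola_filter_fst_le (c : ℕ) :
    ∑ p ∈ hyperbola N with p.1 ≤ c, f p.1 p.2 = ∑ i ∈ Icc 1 c, ∑ j ∈ Icc 1 (N / i), f i j := by
  refine sum_finset_product' _ _ _ fun ⟨i, j⟩ ↦ ?_
  simp only [hyperbola, mem_filter, mem_product, mem_Icc]
  constructor
  · rintro ⟨⟨⟨⟨hi, -⟩, hj, -⟩, hij⟩, hic⟩
    exact ⟨⟨hi, hic⟩, hj, (Nat.le_div_iff_mul_le hi).2 (by rwa [mul_comm])⟩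
  · rintro ⟨⟨hi, hic⟩, hj, hji⟩
    have hij : i * j ≤ N := by rwa [mul_comm, ← Nat.le_div_iff_mul_le hi]
    exact ⟨⟨⟨⟨hi, by nlinarith⟩, hj, by nlinarith⟩, hij⟩, hic⟩

theorem sum_hyperbola_filter_snd_le (c : ℕ) :
    ∑ p ∈ hyperbola N with p.2 ≤ c, f p.1 p.2 = ∑ j ∈ Icc 1 c, ∑ i ∈ Icc 1 (N / j), f i j := by
  refine sum_finset_product_right' _ _ _ fun ⟨i, j⟩ ↦ ?_
  simp only [hyperbola, mem_filter, mem_product, mem_Icc]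
  constructor
  · rintro ⟨⟨⟨⟨hi, -⟩, hj, -⟩, hij⟩, hjc⟩
    exact ⟨⟨hj, hjc⟩, hi, (Nat.le_div_iff_mul_le hj).2 hij⟩
  · rintro ⟨⟨hj, hjc⟩, hi, hij⟩
    rw [Nat.le_div_iff_mul_le hj] at hij
    exact ⟨⟨⟨⟨hi, by nlinarith⟩, hj, by nlinarith⟩, hij⟩, hjc⟩

theorem sum_hyperbola :
    ∑ p ∈ hyperbola N, f p.1 p.2 = ∑ i ∈ Icc 1 N, ∑ j ∈ Icc 1 (N / i), f i j := by
  rw [← sum_hyperbola_filter_fst_le, filter_true_of_mem]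
  simp +contextual [hyperbola]

theorem sum_hyperbola_eq {a b : ℕ} (hab : a * b ≤ N) (hN : N < (a + 1) * (b + 1)) :
    ∑ i ∈ Icc 1 N, ∑ j ∈ Icc 1 (N / i), f i j =
      ∑ i ∈ Icc 1 a, ∑ j ∈ Icc 1 (N / i), f i j + ∑ j ∈ Icc 1 b, ∑ i ∈ Icc 1 (N / j), f i j -
        ∑ i ∈ Icc 1 a, ∑ j ∈ Icc 1 b, f i j := by
  have hunion : {p ∈ hyperbola N | p.1 ≤ a} ∪ {p ∈ hyperbola N | p.2 ≤ b} = hyperbola N := by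
    rw [← filter_or, filter_true_of_mem]
    rintro ⟨i, j⟩ hp
    have hij : i * j ≤ N := (mem_filter.1 hp).2
    by_contra! h
    obtain ⟨hai, hbj⟩ : a < i ∧ b < j := h
    nlinarith
  have hinter :
      {p ∈ hyperbola N | p.1 ≤ a} ∩ {p ∈ hyperbola N | p.2 ≤ b} = Icc 1 a ×ˢ Icc 1 b := by
    ext ⟨i, j⟩
    simp only [hyperbola, ← filter_and, mem_filter, mem_product, mem_Icc]
    constructor
    · rintro ⟨⟨⟨⟨hi, -⟩, hj, -⟩, -⟩, hia, hjb⟩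
      exact ⟨⟨hi, hia⟩, hj, hjb⟩
    · rintro ⟨⟨hi, hia⟩, hj, hjb⟩
      have hij : i * j ≤ N := le_trans (Nat.mul_le_mul hia hjb) hab
      exact ⟨⟨⟨⟨hi, by nlinarith⟩, hj, by nlinarith⟩, hij⟩, hia, hjb⟩
  have h := sum_union_inter (s₁ := {p ∈ hyperbola N | p.1 ≤ a})
    (s₂ := {p ∈ hyperbola N | p.2 ≤ b}) (f := fun p ↦ f p.1 p.2)
  rwa [hunion, hinter, sum_product', sum_hyperbola, sum_hyperbola_filter_fst_le,
    sum_hyperbola_filter_snd_le, ← eq_sub_iff_add_eq] at h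

end Hyperbola

theorem sum_Icc_moebius_mul_div_eq_one {y : ℕ} (hy : 0 < y) :
    ∑ d ∈ Icc 1 y, moebius d * ((y / d : ℕ) : ℤ) = 1 := by
  have h := sum_Ioc_mul_zeta_eq_sum (moebius : ArithmeticFunction ℤ) y
  rw [moebius_mul_coe_zeta, ← Icc_add_one_left_eq_Ioc, zero_add] at h
  simpa [one_apply, hy.ne', Nat.one_le_iff_ne_zero] using h.symm

theorem sum_moebius_mul_moebius_mul_div_eq_mertens {N c : ℕ} (hc : c ≤ N) :
    ∑ i ∈ Icc 1 c, ∑ j ∈ Icc 1 (N / i), moebius i * moebius j * ((N / (i * j) : ℕ) : ℤ) =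
      mertens c := by
  refine sum_congr rfl fun i hi ↦ ?_
  obtain ⟨hi, hic⟩ := mem_Icc.1 hi
  have hNi : 0 < N / i := Nat.div_pos (hic.trans hc) hi
  simp_rw [mul_assoc, ← mul_sum, ← Nat.div_div_eq_div_mul, sum_Icc_moebius_mul_div_eq_one hNi,
    mul_one]

theorem stmt_13_general (x : ℕ) :
    mertens (x ^ 2) = 2 * mertens x -
      ∑ i ∈ Finset.Icc 1 x, ∑ j ∈ Finset.Icc 1 x,
        (moebius i : ℤ) * (moebius j : ℤ) * ((x ^ 2 / (i * j) : ℕ) : ℤ) := by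
  have hx : x ≤ x ^ 2 := Nat.le_self_pow two_ne_zero x
  have hswap : ∑ j ∈ Icc 1 x, ∑ i ∈ Icc 1 (x ^ 2 / j),
      moebius i * moebius j * ((x ^ 2 / (i * j) : ℕ) : ℤ) = mertens x := by
    rw [← sum_moebius_mul_moebius_mul_div_eq_mertens hx]
    exact sum_congr rfl fun j _ ↦ sum_congr rfl fun i _ ↦ by rw [mul_comm (moebius i), mul_comm i]
  rw [← sum_moebius_mul_moebius_mul_div_eq_mertens (le_refl (x ^ 2)),
    sum_hyperbola_eq _ _ (sq x).ge (by nlinarith),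
    sum_moebius_mul_moebius_mul_div_eq_mertens hx, hswap]
  ring

theorem stmt_13 (x : ℕ) (hx : 0 < x) :
    mertens (x ^ 2) = 2 * mertens x -
      ∑ i ∈ Finset.Icc 1 x, ∑ j ∈ Finset.Icc 1 x,
        (moebius i : ℤ) * (moebius j : ℤ) * ((x ^ 2 / (i * j) : ℕ) : ℤ) :=
  stmt_13_general x
end
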